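/- If the KNV machine reaches a final configuration (unloading by rule 14: ⟨N, 0, •⟩_norm ↦ N) from the initial configuration of a term T, then N is in strong normal form and T reduces to N by a (possibly empty) sequence of rrCbV reduction steps. -/

import Mathlib

set_option autoImplicit true

/-- Lambda terms with de Bruijn indices. -/
inductive Tm : Type
  | var : Nat → Tm
  | app : Tm → Tm → Tm
  | lam : Tm → Tm
  deriving DecidableEq, Repr

/-- Shifting `T↑ᵏᵢ`: add `i` to all indices `≥ k`. -/
def shiftTm (i : Nat) : Nat → Tm → Tm
  | k, .var n => if n ≥ k then .var (n + i) else .var n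
  | k, .app t1 t2 => .app (shiftTm i k t1) (shiftTm i k t2)
  | k, .lam t => .lam (shiftTm i (k + 1) t)

/-- Substitution `T⟨i←T'⟩`. -/
def substTm (t' : Tm) : Nat → Tm → Tm
  | i, .var n => if n < i then .var n else if n = i then shiftTm i 0 t' else .var (n - 1)
  | i, .app t1 t2 => .app (substTm t' i t1) (substTm t' i t2)
  | i, .lam t => .lam (substTm t' (i + 1) t)

/-- `ClosedUnder k t`: all free de Bruijn indices of `t` are `< k`. -/
def ClosedUnder : Nat → Tm → Prop
  | k, .var n => n < k
  | k, .app t u => ClosedUnder k t ∧ ClosedUnder k u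
  | k, .lam t => ClosedUnder (k + 1) t

def sizeTm : Tm → Nat
  | .var _ => 1
  | .app t u => 1 + sizeTm t + sizeTm u
  | .lam t => 1 + sizeTm t

mutual
  /-- Strong normal forms: N ::= Lam N | a. -/
  inductive IsNf : Tm → Prop
    | lam : IsNf t → IsNf (Tm.lam t)
    | ne : IsNe t → IsNf t
  /-- Neutral terms: a ::= Var n | App a N. -/
  inductive IsNe : Tm → Prop
    | var : IsNe (Tm.var n)
    | app : IsNe t → IsNf u → IsNe (Tm.app t u)
end

mutual
  /-- Weak normal forms (fireball): w ::= Lam T | i. -/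
  inductive IsWnf : Tm → Prop
    | lam : IsWnf (Tm.lam t)
    | inert : IsInert t → IsWnf t
  /-- Inert terms: i ::= Var n | App i w. -/
  inductive IsInert : Tm → Prop
    | var : IsInert (Tm.var n)
    | app : IsInert t → IsWnf u → IsInert (Tm.app t u)
end

/-- One-hole contexts (outside-in representation as a tree). -/
inductive Ctx : Type
  | hole : Ctx
  | appL : Ctx → Tm → Ctx   -- App C t : hole in the function position
  | appR : Tm → Ctx → Ctx   -- App t C : hole in the argument position
  | lamC : Ctx → Ctx
  deriving DecidableEq

def plugC : Ctx → Tm → Tm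
  | .hole, t => t
  | .appL c u, t => .app (plugC c t) u
  | .appR u c, t => .app u (plugC c t)
  | .lamC c, t => .lam (plugC c t)

/-- Weak right-to-left CbV contexts: F ::= □ | App F w | App T F. -/
inductive IsFc : Ctx → Prop
  | hole : IsFc .hole
  | appL : IsFc c → IsWnf w → IsFc (.appL c w)
  | appR : IsFc c → IsFc (.appR t c)

mutual
  /-- H ::= App H N | App i R. -/
  inductive IsHc : Ctx → Prop
    | appL : IsHc c → IsNf n → IsHc (.appL c n)
    | appR : IsInert i → IsRc c → IsHc (.appR i c)
  /-- rrCbV contexts: R ::= Lam R | H | F. -/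
  inductive IsRc : Ctx → Prop
    | lam : IsRc c → IsRc (.lamC c)
    | h : IsHc c → IsRc c
    | f : IsFc c → IsRc c
end

/-- βwnf-reduction in a weak right-to-left CbV context. -/
def RedF (t t' : Tm) : Prop :=
  ∃ c b w, IsFc c ∧ IsWnf w ∧
    t = plugC c (.app (.lam b) w) ∧ t' = plugC c (substTm w 0 b)

/-- One-step rrCbV reduction: βwnf-contraction in an rrCbV context. -/
def RedR (t t' : Tm) : Prop :=
  ∃ c b w, IsRc c ∧ IsWnf w ∧
    t = plugC c (.app (.lam b) w) ∧ t' = plugC c (substTm w 0 b)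

/-- Full β-reduction (one step, anywhere). -/
inductive Beta : Tm → Tm → Prop
  | beta : Beta (.app (.lam t) u) (substTm u 0 t)
  | appL : Beta t t' → Beta (.app t u) (.app t' u)
  | appR : Beta u u' → Beta (.app t u) (.app t u')
  | lam : Beta t t' → Beta (.lam t) (.lam t')

mutual
  /-- Machine weak normal forms: W ::= ⟨Lam T, E⟩ | I. -/
  inductive MW : Type
    | clos : Tm → MEnv → MW
    | inert : MI → MW
  /-- Machine inert terms: I ::= V(n) | App I W. -/
  inductive MI : Type
    | avar : Nat → MI
    | mapp : MI → MW → MI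
  /-- Environments: lists of machine wnfs. -/
  inductive MEnv : Type
    | nil : MEnv
    | cons : MW → MEnv → MEnv
end

def lookupEnv : MEnv → Nat → Option MW
  | .nil, _ => none
  | .cons w _, 0 => some w
  | .cons _ e, n + 1 => lookupEnv e n

/-- Stack frames of the KNV machine. -/
inductive Frame : Type
  | closF : Tm → MEnv → Frame  -- (T,E)□
  | argW : MW → Frame          -- □W
  | nfArg : Tm → Frame         -- N□ : App □ N with N a strong nf
  | lamF : Frame               -- λ□
  | inertF : MI → Frame        -- I□ : App I □

/-- Configurations of the KNV machine. -/
inductive Conf : Type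
  | eval : Tm → MEnv → List Frame → Nat → Conf
  | apply : MW → List Frame → Nat → Conf
  | norm : Tm → Nat → List Frame → Conf

/-- Side condition for rules 8–10: the top of the stack is not `(T,E)□` nor `□W`. -/
def notElim : List Frame → Prop
  | Frame.closF _ _ :: _ => False
  | Frame.argW _ :: _ => False
  | _ => True

/-- The 13 transition rules of the KNV machine (Figure 3). -/
inductive Step : Conf → Conf → Prop
  | r1 : Step (.eval (.app t1 t2) e s m) (.eval t2 e (.closF t1 e :: s) m)
  | r2 : Step (.eval (.lam t) e s m) (.apply (.clos t e) s m)
  | r3 : Step (.eval (.var 0) (.cons w e) s m) (.apply w s m)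
  | r4 : Step (.eval (.var (n + 1)) (.cons w e) s m) (.eval (.var n) e s m)
  | r5 : Step (.apply w (.closF t e :: s) m) (.eval t e (.argW w :: s) m)
  | r6 : Step (.apply (.clos t e) (.argW w :: s) m) (.eval t (.cons w e) s m)
  | r7 : Step (.apply (.inert i) (.argW w :: s) m) (.apply (.inert (.mapp i w)) s m)
  | r8 : notElim s →
      Step (.apply (.clos t e) s m)
        (.eval t (.cons (.inert (.avar (m + 1))) e) (.lamF :: s) (m + 1))
  | r9 : notElim s → Step (.apply (.inert (.mapp i w)) s m) (.apply w (.inertF i :: s) m)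
  | r10 : notElim s → Step (.apply (.inert (.avar n)) s m) (.norm (.var (m - n)) m s)
  | r11 : Step (.norm t m (.inertF i :: s)) (.apply (.inert i) (.nfArg t :: s) m)
  | r12 : Step (.norm t m (.lamF :: s)) (.norm (.lam t) (m - 1) s)
  | r13 : Step (.norm a m (.nfArg t :: s)) (.norm (.app a t) m s)

/-- KNV transitions without the β-contraction rule (6). -/
inductive StepNB : Conf → Conf → Prop
  | r1 : StepNB (.eval (.app t1 t2) e s m) (.eval t2 e (.closF t1 e :: s) m)
  | r2 : StepNB (.eval (.lam t) e s m) (.apply (.clos t e) s m)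
  | r3 : StepNB (.eval (.var 0) (.cons w e) s m) (.apply w s m)
  | r4 : StepNB (.eval (.var (n + 1)) (.cons w e) s m) (.eval (.var n) e s m)
  | r5 : StepNB (.apply w (.closF t e :: s) m) (.eval t e (.argW w :: s) m)
  | r7 : StepNB (.apply (.inert i) (.argW w :: s) m) (.apply (.inert (.mapp i w)) s m)
  | r8 : notElim s →
      StepNB (.apply (.clos t e) s m)
        (.eval t (.cons (.inert (.avar (m + 1))) e) (.lamF :: s) (m + 1))
  | r9 : notElim s → StepNB (.apply (.inert (.mapp i w)) s m) (.apply w (.inertF i :: s) m)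
  | r10 : notElim s → StepNB (.apply (.inert (.avar n)) s m) (.norm (.var (m - n)) m s)
  | r11 : StepNB (.norm t m (.inertF i :: s)) (.apply (.inert i) (.nfArg t :: s) m)
  | r12 : StepNB (.norm t m (.lamF :: s)) (.norm (.lam t) (m - 1) s)
  | r13 : StepNB (.norm a m (.nfArg t :: s)) (.norm (.app a t) m s)

mutual
  /-- Stack shape grammar: S1. -/
  inductive WS1 : List Frame → Prop
    | closF : WS1 s → WS1 (.closF t e :: s)
    | argW : WS1 s → WS1 (.argW w :: s)
    | s3 : WS3 s → WS1 s
  /-- Stack shape grammar: S2. -/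
  inductive WS2 : List Frame → Prop
    | nfArg : IsNf t → WS2 s → WS2 (.nfArg t :: s)
    | s3 : WS3 s → WS2 s
  /-- Stack shape grammar: S3. -/
  inductive WS3 : List Frame → Prop
    | nil : WS3 []
    | lamF : WS3 s → WS3 (.lamF :: s)
    | inertF : WS2 s → WS3 (.inertF i :: s)
end

/-- Well-formed configurations. -/
inductive WFConf : Conf → Prop
  | eval : WS1 s → WFConf (.eval t e s m)
  | applyW : WS1 s → WFConf (.apply w s m)
  | applyI : WS2 s → WFConf (.apply (.inert i) s m)
  | normNe : IsNe a → WS2 s → WFConf (.norm a m s)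
  | normNf : IsNf n → WS3 s → WFConf (.norm n m s)

mutual
  /-- Decoding of machine weak normal forms at a de Bruijn level. -/
  inductive DecW : MW → Nat → Tm → Prop
    | clos : DecT t e m 1 b → DecW (.clos t e) m (.lam b)
    | inert : DecI i m t → DecW (.inert i) m t
  /-- Decoding of machine inert terms at a de Bruijn level. -/
  inductive DecI : MI → Nat → Tm → Prop
    | avar : DecI (.avar n) m (.var (m - n))
    | mapp : DecI i m t1 → DecW w m t2 → DecI (.mapp i w) m (.app t1 t2)
  /-- Decoding of a term in an environment at level `m` and binder depth `d`
      (simultaneous substitution of decoded environment entries). -/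
  inductive DecT : Tm → MEnv → Nat → Nat → Tm → Prop
    | varLt : n < d → DecT (.var n) e m d (.var n)
    | varEnv : d ≤ n → lookupEnv e (n - d) = some w → DecW w m t →
        DecT (.var n) e m d (shiftTm d 0 t)
    | varFree : d ≤ n → lookupEnv e (n - d) = none → DecT (.var n) e m d (.var n)
    | app : DecT t1 e m d u1 → DecT t2 e m d u2 →
        DecT (.app t1 t2) e m d (.app u1 u2)
    | lam : DecT t e m (d + 1) b → DecT (.lam t) e m d (.lam b)
end

/-- Annotated terms and frames. -/
inductive Ann : Type
  | tm : Tm → Ann     -- T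
  | tmW : Tm → Ann    -- Tᵂ
  | tmN : Tm → Ann    -- Tᴺ
  | funL : Tm → Ann   -- T□ : App T □
  | argR : Tm → Ann   -- □T : App □ T
  | funLW : Tm → Ann  -- (I□)ᵂ : App I □
  | argRN : Tm → Ann  -- (N□)ᴺ : App □ N
  | lamF : Ann        -- λ□
  deriving DecidableEq

def rankAnn : Ann → Nat
  | .tm _ => 0
  | .funL _ => 1
  | .argR _ => 2
  | .tmW _ => 3
  | .funLW _ => 4
  | .argRN _ => 5
  | .lamF => 6
  | .tmN _ => 7

/-- The strict order on annotated terms/frames from the paper. -/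
def AnnLt (a b : Ann) : Prop := rankAnn a < rankAnn b

/-- Reversed lexicographic extension of `AnnLt` to lists. -/
def RLex (l1 l2 : List Ann) : Prop := List.Lex AnnLt l1.reverse l2.reverse

def plugA : Ann → Tm → Tm
  | .funL t, u => .app t u
  | .argR t, u => .app u t
  | .funLW t, u => .app t u
  | .argRN t, u => .app u t
  | .lamF, u => .lam u
  | .tm t, _ => t
  | .tmW t, _ => t
  | .tmN t, _ => t

/-- Plugging an annotated decomposition (head must be an annotated term). -/
def plugD : List Ann → Option Tm
  | [] => none
  | a :: l =>
    match a with
    | .tm t => some (l.foldl (fun u f => plugA f u) t)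
    | .tmW t => some (l.foldl (fun u f => plugA f u) t)
    | .tmN t => some (l.foldl (fun u f => plugA f u) t)
    | _ => none

/-- Decoding of stacks to lists of annotated frames; the `Nat` is the number
    of λ□ frames in the stack (the current de Bruijn level). -/
inductive DecS : List Frame → Nat → List Ann → Prop
  | nil : DecS [] 0 []
  | closF : DecT t e m 0 t' → DecS s m l → DecS (.closF t e :: s) m (.funL t' :: l)
  | argW : DecW w m t' → DecS s m l → DecS (.argW w :: s) m (.argR t' :: l)
  | nfArg : DecS s m l → DecS (.nfArg t :: s) m (.argRN t :: l)
  | lamF : DecS s m l → DecS (.lamF :: s) (m + 1) (.lamF :: l)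
  | inertF : DecI i m t' → DecS s m l → DecS (.inertF i :: s) m (.funLW t' :: l)

/-- Decoding of configurations to annotated decompositions. -/
inductive DecConf : Conf → List Ann → Prop
  | eval : DecT t e m 0 t' → DecS s m l → DecConf (.eval t e s m) (.tm t' :: l)
  | apply : DecW w m t' → DecS s m l → DecConf (.apply w s m) (.tmW t' :: l)
  | norm : DecS s m l → DecConf (.norm t m s) (.tmN t :: l)

/-- Frames over plain lambda terms (for the context grammars of Figure 5). -/
inductive Fr : Type
  | funL : Tm → Fr  -- flapp T : App T □
  | argR : Tm → Fr  -- frapp T : App □ T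
  | lamF : Fr       -- λ□
  deriving DecidableEq

mutual
  /-- Inside-out grammar: S1. -/
  inductive IoS1 : List Fr → Prop
    | funL : IoS1 s → IoS1 (.funL t :: s)
    | argR : IsWnf w → IoS1 s → IoS1 (.argR w :: s)
    | s3 : IoS3 s → IoS1 s
  /-- Inside-out grammar: S2. -/
  inductive IoS2 : List Fr → Prop
    | argR : IsNf n → IoS2 s → IoS2 (.argR n :: s)
    | s3 : IoS3 s → IoS2 s
  /-- Inside-out grammar: S3. -/
  inductive IoS3 : List Fr → Prop
    | nil : IoS3 []
    | lamF : IoS3 s → IoS3 (.lamF :: s)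
    | funL : IsInert i → IoS2 s → IoS3 (.funL i :: s)
end

mutual
  /-- Outside-in grammar: F. -/
  inductive OiF : List Fr → Prop
    | nil : OiF []
    | argR : IsWnf w → OiF s → OiF (.argR w :: s)
    | funL : OiF s → OiF (.funL t :: s)
  /-- Outside-in grammar: H. -/
  inductive OiH : List Fr → Prop
    | argR : IsNf n → OiH s → OiH (.argR n :: s)
    | funL : IsInert i → OiR s → OiH (.funL i :: s)
  /-- Outside-in grammar: R. -/
  inductive OiR : List Fr → Prop
    | lamF : OiR s → OiR (.lamF :: s)
    | h : OiH s → OiR s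
    | f : OiF s → OiR s
end

def ITm : Tm := .lam (.var 0)
def KTm : Tm := .lam (.lam (.var 1))
def omegaSmall : Tm := .lam (.app (.var 0) (.var 0))
def OmegaTm : Tm := .app omegaSmall omegaSmall

def churchBody : Nat → Tm
  | 0 => .var 0
  | n + 1 => .app (.var 1) (churchBody n)

/-- The n-th Church numeral. -/
def church (n : Nat) : Tm := .lam (.lam (churchBody n))

/-- eₙ = Lam (App (App cₙ ω) 0). -/
def eTm (n : Nat) : Tm := .lam (.app (.app (church n) omegaSmall) (.var 0))

/-!
The decoding of a configuration substitutes the decoded environment into the focused term and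
plugs the result into the context read off the stack. Every transition except rule 6 leaves the
decoding unchanged, and rule 6 contracts a βwnf-redex in the decoded stack context; that context
is an rrCbV context because a well-formed stack follows the grammar S1/S2/S3. Machine variables
are de Bruijn levels, decoded at depth `m` to the index `m - n`; the invariant that every level
stored in a configuration is at most the current depth makes the decoding commute with going
under a λ (rule 8). A final configuration is well formed only if its term is a strong normal form.
-/

theorem shiftTm_zero (k : Nat) (t : Tm) : shiftTm 0 k t = t := by
  induction t generalizing k with
  | var n => simp [shiftTm]
  | app t u iht ihu => simp [shiftTm, iht, ihu]
  | lam t ih => simp [shiftTm, ih]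

theorem shiftTm_shiftTm (a b : Nat) (t : Tm) {k c : Nat} (hk : k ≤ c) (hc : c ≤ b + k) :
    shiftTm a c (shiftTm b k t) = shiftTm (a + b) k t := by
  induction t generalizing k c with
  | var n =>
    by_cases h : k ≤ n
    · simp only [shiftTm, ge_iff_le, h, if_true, show c ≤ n + b by omega]; congr 1; omega
    · simp [shiftTm, h, show ¬ c ≤ n by omega]
  | app t u iht ihu => simp [shiftTm, iht hk hc, ihu hk hc]
  | lam t ih => simp [shiftTm, ih (Nat.succ_le_succ hk) (by omega : c + 1 ≤ b + (k + 1))]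

theorem substTm_shiftTm_succ (u t : Tm) (d k : Nat) :
    substTm u (d + k) (shiftTm (d + 1) k t) = shiftTm d k t := by
  induction t generalizing k with
  | var n =>
    by_cases h : k ≤ n
    · simp [shiftTm, substTm, h, show ¬ n + (d + 1) < d + k by omega,
        show n + (d + 1) ≠ d + k by omega]
    · simp [shiftTm, substTm, h, show n < d + k by omega]
  | app t₁ t₂ ih₁ ih₂ => simp [shiftTm, substTm, ih₁, ih₂]
  | lam t ih => simpa [shiftTm, substTm, Nat.add_assoc] using ih (k + 1)

theorem substTm_var_zero_shiftTm (d : Nat) (u : Tm) :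
    substTm (.var 0) d (shiftTm 1 (d + 1) u) = u := by
  induction u generalizing d with
  | var n =>
    rcases lt_trichotomy n d with h | rfl | h
    · simp [shiftTm, substTm, h, show ¬ d + 1 ≤ n by omega]
    · simp [shiftTm, substTm]
    · simp [shiftTm, substTm, show d + 1 ≤ n by omega, show ¬ n + 1 < d by omega,
        show n + 1 ≠ d by omega]
  | app t u iht ihu => simp [shiftTm, substTm, iht, ihu]
  | lam t ih => simp [shiftTm, substTm, ih]

/-- `decodeTm vs m d t` substitutes `vs` for the free indices `≥ d` of `t`; an index beyond
`vs` is a free variable of the source term and is moved under the `m` binders opened by the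
machine. -/
def decodeTm (vs : List Tm) (m : Nat) : Nat → Tm → Tm
  | d, .var n =>
    if n < d then .var n
    else match vs[n - d]? with
      | some v => shiftTm d 0 v
      | none => .var (n - vs.length + m)
  | d, .app t u => .app (decodeTm vs m d t) (decodeTm vs m d u)
  | d, .lam t => .lam (decodeTm vs m (d + 1) t)

theorem decodeTm_nil (d : Nat) (t : Tm) : decodeTm [] 0 d t = t := by
  induction t generalizing d with
  | var n => by_cases h : n < d <;> simp [decodeTm, h]
  | app t u iht ihu => simp [decodeTm, iht, ihu]
  | lam t ih => simp [decodeTm, ih]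

theorem decodeTm_var_succ_cons (v : Tm) (vs : List Tm) (m n : Nat) :
    decodeTm (v :: vs) m 0 (.var (n + 1)) = decodeTm vs m 0 (.var n) := by
  cases h : vs[n]? <;> simp [decodeTm, h]

theorem decodeTm_cons (v : Tm) (vs : List Tm) (m d : Nat) (t : Tm) :
    decodeTm (v :: vs) m d t = substTm v d (decodeTm vs m (d + 1) t) := by
  induction t generalizing d with
  | var n =>
    rcases lt_trichotomy n d with h | rfl | h
    · simp [decodeTm, substTm, h, show n < d + 1 by omega]
    · simp [decodeTm, substTm]
    · have hn : n - d = n - (d + 1) + 1 := by omega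
      cases hk : vs[n - (d + 1)]? with
      | some w =>
        simp [decodeTm, hk, hn, show ¬ n < d by omega, show ¬ n < d + 1 by omega]
        simpa using (substTm_shiftTm_succ v w d 0).symm
      | none =>
        have := List.getElem?_eq_none_iff.mp hk
        simp [decodeTm, substTm, hk, hn, show ¬ n < d by omega, show ¬ n < d + 1 by omega,
          show ¬ n - vs.length + m < d by omega, show n - vs.length + m ≠ d by omega]
        omega
  | app t u iht ihu => simp [decodeTm, substTm, iht, ihu]
  | lam t ih => simp [decodeTm, substTm, ih]

theorem decodeTm_map_shift (vs : List Tm) (m d : Nat) (t : Tm) :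
    decodeTm (vs.map (shiftTm 1 0)) (m + 1) d t = shiftTm 1 d (decodeTm vs m d t) := by
  induction t generalizing d with
  | var n =>
    by_cases h : n < d
    · simp [decodeTm, shiftTm, h]
    · cases hk : vs[n - d]? with
      | some w =>
        simp only [decodeTm, h, hk, if_false, List.getElem?_map, Option.map_some]
        rw [shiftTm_shiftTm _ _ _ le_rfl (by omega),
          shiftTm_shiftTm _ _ _ (Nat.zero_le d) (by omega), Nat.add_comm]
      | none =>
        have := List.getElem?_eq_none_iff.mp hk
        simp [decodeTm, shiftTm, h, hk, show d ≤ n - vs.length + m by omega]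
        omega
  | app t u iht ihu => simp [decodeTm, shiftTm, iht, ihu]
  | lam t ih => simp [decodeTm, shiftTm, ih]

theorem decodeTm_fresh (vs : List Tm) (m d : Nat) (t : Tm) :
    decodeTm (.var 0 :: vs.map (shiftTm 1 0)) (m + 1) d t = decodeTm vs m (d + 1) t := by
  rw [decodeTm_cons, decodeTm_map_shift, substTm_var_zero_shiftTm]

mutual
def decodeW : MW → Nat → Tm
  | .clos t e, m => .lam (decodeTm (decodeEnv e m) m 1 t)
  | .inert i, m => decodeI i m
def decodeI : MI → Nat → Tm
  | .avar n, m => .var (m - n)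
  | .mapp i w, m => .app (decodeI i m) (decodeW w m)
def decodeEnv : MEnv → Nat → List Tm
  | .nil, _ => []
  | .cons w e, m => decodeW w m :: decodeEnv e m
end

mutual
def maxLevelW : MW → Nat
  | .clos _ e => maxLevelEnv e
  | .inert i => maxLevelI i
def maxLevelI : MI → Nat
  | .avar n => n
  | .mapp i w => max (maxLevelI i) (maxLevelW w)
def maxLevelEnv : MEnv → Nat
  | .nil => 0
  | .cons w e => max (maxLevelW w) (maxLevelEnv e)
end

mutual
theorem decodeW_succ : ∀ (w : MW) {m : Nat}, maxLevelW w ≤ m →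
    decodeW w (m + 1) = shiftTm 1 0 (decodeW w m)
  | .clos t e, _, h => by
    simp [decodeW, decodeEnv_succ e h, decodeTm_map_shift, shiftTm]
  | .inert i, _, h => decodeI_succ i h
theorem decodeI_succ : ∀ (i : MI) {m : Nat}, maxLevelI i ≤ m →
    decodeI i (m + 1) = shiftTm 1 0 (decodeI i m)
  | .avar n, _, h => by
    simp only [maxLevelI] at h
    simp [decodeI, shiftTm]; omega
  | .mapp i w, _, h => by
    simp only [maxLevelI, max_le_iff] at h
    simp [decodeI, shiftTm, decodeI_succ i h.1, decodeW_succ w h.2]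
theorem decodeEnv_succ : ∀ (e : MEnv) {m : Nat}, maxLevelEnv e ≤ m →
    decodeEnv e (m + 1) = (decodeEnv e m).map (shiftTm 1 0)
  | .nil, _, _ => rfl
  | .cons w e, _, h => by
    simp only [maxLevelEnv, max_le_iff] at h
    simp [decodeEnv, decodeW_succ w h.1, decodeEnv_succ e h.2]
end

mutual
theorem isWnf_decodeW : ∀ (w : MW) (m : Nat), IsWnf (decodeW w m)
  | .clos _ _, _ => .lam
  | .inert i, m => .inert (isInert_decodeI i m)
theorem isInert_decodeI : ∀ (i : MI) (m : Nat), IsInert (decodeI i m)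
  | .avar _, _ => .var
  | .mapp i w, m => .app (isInert_decodeI i m) (isWnf_decodeW w m)
end

def stackCtx : List Frame → Nat → Ctx → Ctx
  | [], _, c => c
  | .closF t e :: s, m, c => stackCtx s m (.appR (decodeTm (decodeEnv e m) m 0 t) c)
  | .argW w :: s, m, c => stackCtx s m (.appL c (decodeW w m))
  | .nfArg t :: s, m, c => stackCtx s m (.appL c t)
  | .lamF :: s, m, c => stackCtx s (m - 1) (.lamC c)
  | .inertF i :: s, m, c => stackCtx s m (.appR (decodeI i m) c)

def plugStack : List Frame → Nat → Tm → Tm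
  | [], _, t => t
  | .closF t' e :: s, m, t => plugStack s m (.app (decodeTm (decodeEnv e m) m 0 t') t)
  | .argW w :: s, m, t => plugStack s m (.app t (decodeW w m))
  | .nfArg n :: s, m, t => plugStack s m (.app t n)
  | .lamF :: s, m, t => plugStack s (m - 1) (.lam t)
  | .inertF i :: s, m, t => plugStack s m (.app (decodeI i m) t)

theorem plugC_stackCtx (s : List Frame) (m : Nat) (c : Ctx) (t : Tm) :
    plugC (stackCtx s m c) t = plugStack s m (plugC c t) := by
  induction s generalizing m c with
  | nil => rfl
  | cons f s ih => cases f <;> apply ih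

-- The recursive calls are elaborated without their expected type `IsRc (stackCtx (f :: s) m c)`,
-- which would otherwise fix the implicit stack to `f :: s` instead of `s`.
mutual
theorem isRc_stackCtx_of_ws1 {s : List Frame} {c : Ctx} (m : Nat) (hs : WS1 s) (hc : IsFc c) :
    IsRc (stackCtx s m c) :=
  match hs with
  | .closF hs => (isRc_stackCtx_of_ws1 m hs (.appR hc) :)
  | .argW hs => (isRc_stackCtx_of_ws1 m hs (.appL hc (isWnf_decodeW _ m)) :)
  | .s3 hs => isRc_stackCtx_of_ws3 m hs (.f hc)
theorem isRc_stackCtx_of_ws2 {s : List Frame} {c : Ctx} (m : Nat) (hs : WS2 s) (hc : IsHc c) :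
    IsRc (stackCtx s m c) :=
  match hs with
  | .nfArg hn hs => (isRc_stackCtx_of_ws2 m hs (.appL hc hn) :)
  | .s3 hs => isRc_stackCtx_of_ws3 m hs (.h hc)
theorem isRc_stackCtx_of_ws3 {s : List Frame} {c : Ctx} (m : Nat) (hs : WS3 s) (hc : IsRc c) :
    IsRc (stackCtx s m c) :=
  match hs with
  | .nil => hc
  | .lamF hs => isRc_stackCtx_of_ws3 (m - 1) hs (.lam hc)
  | .inertF hs => (isRc_stackCtx_of_ws2 m hs (.appR (isInert_decodeI _ m) hc) :)
end

def decodeConf : Conf → Tm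
  | .eval t e s m => plugStack s m (decodeTm (decodeEnv e m) m 0 t)
  | .apply w s m => plugStack s m (decodeW w m)
  | .norm t m s => plugStack s m t

def StackLevelsLe : List Frame → Nat → Prop
  | [], _ => True
  | .closF _ e :: s, m => maxLevelEnv e ≤ m ∧ StackLevelsLe s m
  | .argW w :: s, m => maxLevelW w ≤ m ∧ StackLevelsLe s m
  | .nfArg _ :: s, m => StackLevelsLe s m
  | .lamF :: s, m => StackLevelsLe s (m - 1)
  | .inertF i :: s, m => maxLevelI i ≤ m ∧ StackLevelsLe s m

def ConfLevelsLe : Conf → Prop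
  | .eval _ e s m => maxLevelEnv e ≤ m ∧ StackLevelsLe s m
  | .apply w s m => maxLevelW w ≤ m ∧ StackLevelsLe s m
  | .norm _ m s => StackLevelsLe s m

theorem WS1.ws3_of_notElim {s : List Frame} (hs : WS1 s) (hne : notElim s) : WS3 s := by
  cases hs with
  | s3 hs => exact hs
  | _ => simp [notElim] at hne

theorem Step.wfConf {c c' : Conf} (h : Step c c') (hc : WFConf c) : WFConf c' := by
  cases h with
  | r1 => cases hc with | eval hs => exact .eval (.closF hs)
  | r2 => cases hc with | eval hs => exact .applyW hs
  | r3 => cases hc with | eval hs => exact .applyW hs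
  | r4 => cases hc with | eval hs => exact .eval hs
  | r5 =>
    cases hc with
    | applyW hs => cases hs with | closF hs => exact .eval (.argW hs) | s3 hs => cases hs
    | applyI hs => cases hs with | s3 hs => cases hs
  | r6 =>
    cases hc with
    | applyW hs => cases hs with | argW hs => exact .eval hs | s3 hs => cases hs
  | r7 =>
    cases hc with
    | applyW hs => cases hs with | argW hs => exact .applyW hs | s3 hs => cases hs
    | applyI hs => cases hs with | s3 hs => cases hs
  | r8 hne => cases hc with | applyW hs => exact .eval (.s3 (.lamF (hs.ws3_of_notElim hne)))
  | r9 hne =>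
    cases hc with
    | applyW hs => exact .applyW (.s3 (.inertF (.s3 (hs.ws3_of_notElim hne))))
    | applyI hs => exact .applyW (.s3 (.inertF hs))
  | r10 hne =>
    cases hc with
    | applyW hs => exact .normNe .var (.s3 (hs.ws3_of_notElim hne))
    | applyI hs => exact .normNe .var hs
  | r11 =>
    cases hc with
    | normNe ha hs =>
      cases hs with | s3 hs => cases hs with | inertF hs => exact .applyI (.nfArg (.ne ha) hs)
    | normNf hn hs => cases hs with | inertF hs => exact .applyI (.nfArg hn hs)
  | r12 =>
    cases hc with
    | normNe ha hs =>
      cases hs with | s3 hs => cases hs with | lamF hs => exact .normNf (.lam (.ne ha)) hs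
    | normNf hn hs => cases hs with | lamF hs => exact .normNf (.lam hn) hs
  | r13 =>
    cases hc with
    | normNe ha hs =>
      cases hs with | nfArg hn hs => exact .normNe (.app ha hn) hs | s3 hs => cases hs
    | normNf _ hs => cases hs

theorem WFConf.isNf_norm {t : Tm} {m : Nat} {s : List Frame} (h : WFConf (.norm t m s)) :
    IsNf t := by
  cases h with
  | normNe ha _ => exact .ne ha
  | normNf hn _ => exact hn

theorem Step.confLevelsLe {c c' : Conf} (h : Step c c') (hc : ConfLevelsLe c) :
    ConfLevelsLe c' := by
  cases h <;> simp_all [ConfLevelsLe, StackLevelsLe, maxLevelW, maxLevelI, maxLevelEnv]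
  omega

theorem Step.stepNB_or_beta {c c' : Conf} (h : Step c c') :
    StepNB c c' ∨ ∃ t e w s m, c = .apply (.clos t e) (.argW w :: s) m ∧
      c' = .eval t (.cons w e) s m := by
  cases h
  case r6 => exact .inr ⟨_, _, _, _, _, rfl, rfl⟩
  all_goals exact .inl (by constructor <;> assumption)

theorem StepNB.decodeConf_eq {c c' : Conf} (h : StepNB c c') (hc : ConfLevelsLe c) :
    decodeConf c' = decodeConf c := by
  cases h with
  | r3 => simp [decodeConf, decodeEnv, decodeTm, shiftTm_zero]
  | r4 => simp only [decodeConf, decodeEnv, decodeTm_var_succ_cons]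
  | r8 =>
    simp only [ConfLevelsLe] at hc
    simp [decodeConf, plugStack, decodeEnv, decodeW, decodeI, decodeEnv_succ _ hc.1,
      decodeTm_fresh]
  | _ => rfl

theorem redR_decodeConf_beta {t : Tm} {e : MEnv} {w : MW} {s : List Frame} {m : Nat}
    (hc : WFConf (.apply (.clos t e) (.argW w :: s) m)) :
    RedR (decodeConf (.apply (.clos t e) (.argW w :: s) m))
      (decodeConf (.eval t (.cons w e) s m)) := by
  have hs : WS1 s := by
    cases hc with | applyW hs => cases hs with | argW hs => exact hs | s3 hs => cases hs
  refine ⟨stackCtx s m .hole, decodeTm (decodeEnv e m) m 1 t, decodeW w m,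
    isRc_stackCtx_of_ws1 m hs .hole, isWnf_decodeW w m, ?_, ?_⟩
  · rw [plugC_stackCtx]; rfl
  · rw [plugC_stackCtx, decodeConf, decodeEnv, decodeTm_cons]; rfl

theorem Step.reflGen_redR_decodeConf {c c' : Conf} (h : Step c c') (hwf : WFConf c)
    (hlv : ConfLevelsLe c) : Relation.ReflGen RedR (decodeConf c) (decodeConf c') := by
  rcases h.stepNB_or_beta with h | ⟨t, e, w, s, m, rfl, rfl⟩
  · rw [h.decodeConf_eq hlv]
  · exact .single (redR_decodeConf_beta hwf)

theorem reflTransGen_step_decodeConf {c c' : Conf} (h : Relation.ReflTransGen Step c c')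
    (hwf : WFConf c) (hlv : ConfLevelsLe c) :
    WFConf c' ∧ ConfLevelsLe c' ∧
      Relation.ReflTransGen RedR (decodeConf c) (decodeConf c') := by
  induction h with
  | refl => exact ⟨hwf, hlv, .refl⟩
  | tail _ hstep ih =>
    obtain ⟨hwf', hlv', hred⟩ := ih
    exact ⟨hstep.wfConf hwf', hstep.confLevelsLe hlv',
      hred.trans (hstep.reflGen_redR_decodeConf hwf' hlv').to_reflTransGen⟩

/-- if KNV reaches a final configuration ⟨N,0,•⟩_norm from the
    initial configuration of T, then N is a strong normal form and T reduces
    to N by a sequence of rrCbV steps. -/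
theorem knv_final_correct (T N : Tm)
    (h : Relation.ReflTransGen Step (Conf.eval T MEnv.nil [] 0) (Conf.norm N 0 [])) :
    IsNf N ∧ Relation.ReflTransGen RedR T N := by
  obtain ⟨hwf, -, hred⟩ :=
    reflTransGen_step_decodeConf h (.eval (.s3 .nil)) ⟨le_rfl, trivial⟩
  refine ⟨hwf.isNf_norm, ?_⟩
  simpa [decodeConf, plugStack, decodeEnv, decodeTm_nil] using hred
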